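/- (Sufficiency of the essential part, without clarification assumption.) For any Boolean matrix I and any set F of formal concepts of I, if E(I) ≤ A_F ∘ B_F, then I = A_F ∘ B_F. -/

import Mathlib

/-- `C↑`: attributes shared by all objects in `C`. -/
def up {n m : ℕ} (I : Fin n → Fin m → Bool) (C : Finset (Fin n)) : Finset (Fin m) :=
  Finset.univ.filter fun j => ∀ i ∈ C, I i j = true

/-- `D↓`: objects sharing all attributes in `D`. -/
def dn {n m : ℕ} (I : Fin n → Fin m → Bool) (D : Finset (Fin m)) : Finset (Fin n) :=
  Finset.univ.filter fun i => ∀ j ∈ D, I i j = true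

/-- A formal concept of `I`: a pair `⟨C,D⟩` with `C↑ = D` and `D↓ = C`. -/
def isConcept {n m : ℕ} (I : Fin n → Fin m → Bool)
    (p : Finset (Fin n) × Finset (Fin m)) : Prop :=
  up I p.1 = p.2 ∧ dn I p.2 = p.1

/-- The interval `[γ(C), μ(D)]` in the concept lattice of `I`
(concepts ordered by extent inclusion). -/
def interval {n m : ℕ} (I : Fin n → Fin m → Bool)
    (C : Finset (Fin n)) (D : Finset (Fin m)) :
    Set (Finset (Fin n) × Finset (Fin m)) :=
  {p | isConcept I p ∧ dn I (up I C) ⊆ p.1 ∧ p.1 ⊆ dn I D}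

/-- The Boolean matrix `A_F ∘ B_F` determined by a set `F` of concepts:
entry `(i,j)` is 1 iff some concept in `F` covers `(i,j)`. -/
def cov {n m : ℕ} (F : Finset (Finset (Fin n) × Finset (Fin m))) :
    Fin n → Fin m → Bool :=
  fun i j => decide (∃ p ∈ F, i ∈ p.1 ∧ j ∈ p.2)

/-- The essential part `E(I)`: entry `(i,j)` is 1 iff the interval `I_{ij}` is
non-empty and inclusion-minimal among the non-empty intervals `I_{i'j'}`. -/
noncomputable def Ess {n m : ℕ} (I : Fin n → Fin m → Bool) : Fin n → Fin m → Bool :=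
  fun i j =>
    @decide ((interval I {i} {j}).Nonempty ∧
      ∀ (i' : Fin n) (j' : Fin m), (interval I {i'} {j'}).Nonempty →
        interval I {i'} {j'} ⊆ interval I {i} {j} →
        interval I {i'} {j'} = interval I {i} {j})
      (Classical.propDecidable _)

/-! Every nonzero entry `(i, j)` of `I` has a non-empty interval `I_{ij}`, and among the finitely
many non-empty intervals below it there is an inclusion-minimal one `I_{i'j'}`, i.e. an essential
entry. By hypothesis some concept of `F` covers `(i', j')`, so it lies in `I_{i'j'} ⊆ I_{ij}` and
therefore covers `(i, j)` too. Conversely, every entry covered by a concept is an entry of `I`. -/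

variable {n m : ℕ} {I : Fin n → Fin m → Bool}

@[simp]
lemma mem_up {C : Finset (Fin n)} {j : Fin m} : j ∈ up I C ↔ ∀ i ∈ C, I i j = true := by
  simp [up]

@[simp]
lemma mem_dn {D : Finset (Fin m)} {i : Fin n} : i ∈ dn I D ↔ ∀ j ∈ D, I i j = true := by
  simp [dn]

lemma subset_dn_iff_subset_up {C : Finset (Fin n)} {D : Finset (Fin m)} :
    C ⊆ dn I D ↔ D ⊆ up I C := by
  simp only [Finset.subset_iff, mem_up, mem_dn]
  exact forall₂_comm

lemma subset_dn_up (C : Finset (Fin n)) : C ⊆ dn I (up I C) :=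
  subset_dn_iff_subset_up.2 subset_rfl

lemma up_antitone {C C' : Finset (Fin n)} (h : C ⊆ C') : up I C' ⊆ up I C := by
  intro j hj
  simp only [mem_up] at hj ⊢
  exact fun i hi => hj i (h hi)

lemma dn_antitone {D D' : Finset (Fin m)} (h : D ⊆ D') : dn I D' ⊆ dn I D := by
  intro i hi
  simp only [mem_dn] at hi ⊢
  exact fun j hj => hi j (h hj)

lemma isConcept_dn_up (C : Finset (Fin n)) : isConcept I (dn I (up I C), up I C) :=
  ⟨(up_antitone (subset_dn_up C)).antisymm (subset_dn_iff_subset_up.1 subset_rfl), rfl⟩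

namespace isConcept

variable {p : Finset (Fin n) × Finset (Fin m)}

lemma apply_eq_true (hp : isConcept I p) {i : Fin n} {j : Fin m} (hi : i ∈ p.1) (hj : j ∈ p.2) :
    I i j = true := by
  rw [← hp.1, mem_up] at hj
  exact hj i hi

lemma dn_up_subset_iff (hp : isConcept I p) {C : Finset (Fin n)} :
    dn I (up I C) ⊆ p.1 ↔ C ⊆ p.1 := by
  refine ⟨(subset_dn_up C).trans, fun hC => ?_⟩
  rw [← hp.2, ← hp.1]
  exact dn_antitone (up_antitone hC)

lemma subset_dn_iff (hp : isConcept I p) {D : Finset (Fin m)} : p.1 ⊆ dn I D ↔ D ⊆ p.2 := by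
  rw [subset_dn_iff_subset_up, hp.1]

end isConcept

lemma mem_interval_iff {C : Finset (Fin n)} {D : Finset (Fin m)}
    {p : Finset (Fin n) × Finset (Fin m)} :
    p ∈ interval I C D ↔ isConcept I p ∧ C ⊆ p.1 ∧ D ⊆ p.2 :=
  ⟨fun ⟨hp, hC, hD⟩ => ⟨hp, hp.dn_up_subset_iff.1 hC, hp.subset_dn_iff.1 hD⟩,
    fun ⟨hp, hC, hD⟩ => ⟨hp, hp.dn_up_subset_iff.2 hC, hp.subset_dn_iff.2 hD⟩⟩

lemma mem_interval_singleton_iff {i : Fin n} {j : Fin m} {p : Finset (Fin n) × Finset (Fin m)} :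
    p ∈ interval I {i} {j} ↔ isConcept I p ∧ i ∈ p.1 ∧ j ∈ p.2 := by
  simp only [mem_interval_iff, Finset.singleton_subset_iff]

lemma interval_singleton_nonempty {i : Fin n} {j : Fin m} (hij : I i j = true) :
    (interval I {i} {j}).Nonempty :=
  ⟨_, mem_interval_singleton_iff.2
    ⟨isConcept_dn_up {i}, subset_dn_up {i} (Finset.mem_singleton_self i), by simpa using hij⟩⟩

lemma exists_ess_interval_subset {i : Fin n} {j : Fin m} (hij : I i j = true) :
    ∃ i' j', Ess I i' j' = true ∧ interval I {i'} {j'} ⊆ interval I {i} {j} := by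
  let below : Set (Fin n × Fin m) := {q | (interval I {q.1} {q.2}).Nonempty ∧
    interval I {q.1} {q.2} ⊆ interval I {i} {j}}
  obtain ⟨q, ⟨hq_ne, hq_sub⟩, hq_min⟩ :=
    below.toFinite.exists_minimalFor (fun q : Fin n × Fin m => interval I {q.1} {q.2}) below
      ⟨(i, j), interval_singleton_nonempty hij, subset_rfl⟩
  refine ⟨q.1, q.2, ?_, hq_sub⟩
  simp only [Ess, decide_eq_true_eq]
  exact ⟨hq_ne, fun i' j' hne hsub =>
    hsub.antisymm (hq_min (j := (i', j')) ⟨hne, hsub.trans hq_sub⟩ hsub)⟩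

variable {F : Finset (Finset (Fin n) × Finset (Fin m))}

lemma cov_eq_true_iff {i : Fin n} {j : Fin m} :
    cov F i j = true ↔ ∃ p ∈ F, i ∈ p.1 ∧ j ∈ p.2 := by
  simp [cov]

lemma apply_eq_true_of_cov_eq_true (hF : ∀ p ∈ F, isConcept I p) {i : Fin n} {j : Fin m}
    (hij : cov F i j = true) : I i j = true := by
  obtain ⟨p, hpF, hi, hj⟩ := cov_eq_true_iff.1 hij
  exact (hF p hpF).apply_eq_true hi hj

lemma cov_eq_true_of_ess_le (hF : ∀ p ∈ F, isConcept I p) (h : ∀ i j, Ess I i j ≤ cov F i j)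
    {i : Fin n} {j : Fin m} (hij : I i j = true) : cov F i j = true := by
  obtain ⟨i', j', hess, hsub⟩ := exists_ess_interval_subset hij
  obtain ⟨p, hpF, hi', hj'⟩ := cov_eq_true_iff.1 (Bool.eq_true_of_true_le (hess ▸ h i' j'))
  obtain ⟨-, hi, hj⟩ :=
    mem_interval_singleton_iff.1 (hsub (mem_interval_singleton_iff.2 ⟨hF p hpF, hi', hj'⟩))
  exact cov_eq_true_iff.2 ⟨p, hpF, hi, hj⟩

theorem ess_sufficient {n m : ℕ} (I : Fin n → Fin m → Bool)
    (F : Finset (Finset (Fin n) × Finset (Fin m)))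
    (hF : ∀ p ∈ F, isConcept I p)
    (h : ∀ i j, Ess I i j ≤ cov F i j) :
    ∀ i j, I i j = cov F i j := fun _ _ =>
  Bool.eq_iff_iff.2 ⟨cov_eq_true_of_ess_le hF h, apply_eq_true_of_cov_eq_true hF⟩
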